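/- Let u(x,y) = (y³ − x³)/3 and Ω = (0,1)². There is no positive function σ ∈ C¹(Ω) with both σ ∈ L^∞(Ω) and σ⁻¹ ∈ L^∞(Ω) such that div(σ∇u) = 0 in Ω. -/

import Mathlib

/-!
Here `∇u = (-x², y²)`, so `div (σ ∇u) = 0` reads `Dσ · ∇u = 2 (x - y) σ`. Equivalently
`σ x² y²` is constant along the integral curves of `∇u`, which are the level curves of
`1/x + 1/y`. The level curve through `(x, y)` meets the diagonal at `(m, m)`, `m = 2xy/(x + y)`
the harmonic mean, so `σ(x, y) x² y² = σ(m, m) m⁴ ≤ C (2x)⁴` for a bound `C` of `σ`.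
Hence `σ(x, y) → 0` as `x → 0`, which contradicts the bound on `σ⁻¹`.
-/

/-- Partial derivative in x. -/
noncomputable def pdx (f : ℝ × ℝ → ℝ) (p : ℝ × ℝ) : ℝ := fderiv ℝ f p (1, 0)
/-- Partial derivative in y. -/
noncomputable def pdy (f : ℝ × ℝ → ℝ) (p : ℝ × ℝ) : ℝ := fderiv ℝ f p (0, 1)

open Set

abbrev unitSquare : Set (ℝ × ℝ) := Ioo 0 1 ×ˢ Ioo 0 1

theorem isOpen_unitSquare : IsOpen unitSquare := isOpen_Ioo.prod isOpen_Ioo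

theorem pdx_eq_deriv {f : ℝ × ℝ → ℝ} {p : ℝ × ℝ} (hf : DifferentiableAt ℝ f p) :
    pdx f p = deriv (fun x => f (x, p.2)) p.1 :=
  ((hf.hasFDerivAt.comp_hasDerivAt p.1
    ((hasDerivAt_id p.1).prodMk (hasDerivAt_const p.1 p.2))).deriv).symm

theorem pdy_eq_deriv {f : ℝ × ℝ → ℝ} {p : ℝ × ℝ} (hf : DifferentiableAt ℝ f p) :
    pdy f p = deriv (fun y => f (p.1, y)) p.2 :=
  ((hf.hasFDerivAt.comp_hasDerivAt p.2
    ((hasDerivAt_const p.2 p.1).prodMk (hasDerivAt_id p.2))).deriv).symm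

theorem pdx_mul_add_pdy_mul {σ f g : ℝ × ℝ → ℝ} {p : ℝ × ℝ} (hσ : DifferentiableAt ℝ σ p)
    (hf : DifferentiableAt ℝ f p) (hg : DifferentiableAt ℝ g p) :
    pdx (fun q => σ q * f q) p + pdy (fun q => σ q * g q) p =
      fderiv ℝ σ p (f p, g p) + σ p * (pdx f p + pdy g p) := by
  have hfg : (f p, g p) = f p • ((1 : ℝ), (0 : ℝ)) + g p • ((0 : ℝ), (1 : ℝ)) := by simp
  rw [pdx, pdy, pdx, pdy, fderiv_fun_mul hσ hf, fderiv_fun_mul hσ hg, hfg, map_add, map_smul,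
    map_smul]
  simp only [add_apply, smul_apply, smul_eq_mul]
  ring

theorem fderiv_apply_neg_sq_sq {σ : ℝ × ℝ → ℝ} {p : ℝ × ℝ} (hσ : DifferentiableAt ℝ σ p)
    (hpde : pdx (fun q => σ q * pdx (fun q : ℝ × ℝ => (q.2 ^ 3 - q.1 ^ 3) / 3) q) p +
      pdy (fun q => σ q * pdy (fun q : ℝ × ℝ => (q.2 ^ 3 - q.1 ^ 3) / 3) q) p = 0) :
    fderiv ℝ σ p (-p.1 ^ 2, p.2 ^ 2) = 2 * (p.1 - p.2) * σ p := by
  have hux : pdx (fun q : ℝ × ℝ => (q.2 ^ 3 - q.1 ^ 3) / 3) = fun q => -q.1 ^ 2 := by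
    ext q; rw [pdx_eq_deriv (by fun_prop)]; simp [neg_div]
  have huy : pdy (fun q : ℝ × ℝ => (q.2 ^ 3 - q.1 ^ 3) / 3) = fun q => q.2 ^ 2 := by
    ext q; rw [pdy_eq_deriv (by fun_prop)]; simp
  rw [hux, huy, pdx_mul_add_pdy_mul hσ (by fun_prop) (by fun_prop),
    pdx_eq_deriv (by fun_prop), pdy_eq_deriv (by fun_prop)] at hpde
  simp only [deriv.fun_neg', differentiableAt_fun_id, deriv_fun_pow, Nat.cast_ofNat,
    Nat.add_one_sub_one, pow_one, deriv_id'', mul_one] at hpde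
  linarith

theorem hasDerivAt_weight_comp_integralCurve {σ : ℝ × ℝ → ℝ} {γ : ℝ → ℝ × ℝ} {t : ℝ}
    (hγ : HasDerivAt γ (-(γ t).1 ^ 2, (γ t).2 ^ 2) t) (hσ : DifferentiableAt ℝ σ (γ t))
    (hflow : fderiv ℝ σ (γ t) (-(γ t).1 ^ 2, (γ t).2 ^ 2) = 2 * ((γ t).1 - (γ t).2) * σ (γ t)) :
    HasDerivAt (fun s => σ (γ s) * ((γ s).1 ^ 2 * (γ s).2 ^ 2)) 0 t := by
  have hσγ := hσ.hasFDerivAt.comp_hasDerivAt t hγ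
  rw [hflow] at hσγ
  have h1 : HasDerivAt (fun s => (γ s).1) (-(γ t).1 ^ 2) t :=
    (hasFDerivAt_fst (𝕜 := ℝ) (p := γ t)).comp_hasDerivAt t hγ
  have h2 : HasDerivAt (fun s => (γ s).2) ((γ t).2 ^ 2) t :=
    (hasFDerivAt_snd (𝕜 := ℝ) (p := γ t)).comp_hasDerivAt t hγ
  refine (hσγ.fun_mul ((h1.fun_pow 2).fun_mul (h2.fun_pow 2))).congr_deriv ?_
  simp only [Function.comp_apply]
  ring

/-- The level curve `1/x + 1/y = c`, parametrised by `t = 1/x`. -/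
noncomputable def levelCurve (c t : ℝ) : ℝ × ℝ := (t⁻¹, (c - t)⁻¹)

theorem hasDerivAt_levelCurve {c t : ℝ} (ht : t ≠ 0) (hct : c - t ≠ 0) :
    HasDerivAt (levelCurve c) (-(levelCurve c t).1 ^ 2, (levelCurve c t).2 ^ 2) t := by
  refine ((hasDerivAt_inv ht).prodMk (((hasDerivAt_id t).const_sub c).inv hct)).congr_deriv ?_
  simp [levelCurve, inv_pow]

theorem levelCurve_mem {c t : ℝ} (ht : t ∈ Ioo 1 (c - 1)) :
    levelCurve c t ∈ unitSquare := by
  obtain ⟨h1, h2⟩ := ht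
  exact ⟨⟨inv_pos.2 (by linarith), inv_lt_one_of_one_lt₀ h1⟩,
    ⟨inv_pos.2 (by linarith), inv_lt_one_of_one_lt₀ (by linarith)⟩⟩

theorem weight_levelCurve_eq {σ : ℝ × ℝ → ℝ} (hσ : DifferentiableOn ℝ σ unitSquare)
    (hflow : ∀ p ∈ unitSquare, fderiv ℝ σ p (-p.1 ^ 2, p.2 ^ 2) = 2 * (p.1 - p.2) * σ p)
    {c s t : ℝ} (hs : s ∈ Ioo 1 (c - 1)) (ht : t ∈ Ioo 1 (c - 1)) :
    σ (levelCurve c s) * ((levelCurve c s).1 ^ 2 * (levelCurve c s).2 ^ 2) =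
      σ (levelCurve c t) * ((levelCurve c t).1 ^ 2 * (levelCurve c t).2 ^ 2) := by
  have hderiv : ∀ r ∈ Ioo 1 (c - 1), HasDerivAt
      (fun r => σ (levelCurve c r) * ((levelCurve c r).1 ^ 2 * (levelCurve c r).2 ^ 2)) 0 r := by
    rintro r ⟨h1, h2⟩
    have hmem := levelCurve_mem ⟨h1, h2⟩
    exact hasDerivAt_weight_comp_integralCurve (hasDerivAt_levelCurve (by linarith) (by linarith))
      (hσ.differentiableAt (isOpen_unitSquare.mem_nhds hmem)) (hflow _ hmem)
  exact isOpen_Ioo.is_const_of_deriv_eq_zero isPreconnected_Ioo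
    (fun r hr => (hderiv r hr).differentiableAt.differentiableWithinAt)
    (fun r hr => (hderiv r hr).deriv) hs ht

theorem weight_eq_harmonicMean {σ : ℝ × ℝ → ℝ} (hσ : DifferentiableOn ℝ σ unitSquare)
    (hflow : ∀ p ∈ unitSquare, fderiv ℝ σ p (-p.1 ^ 2, p.2 ^ 2) = 2 * (p.1 - p.2) * σ p)
    {x y : ℝ} (hx : x ∈ Ioo 0 1) (hy : y ∈ Ioo 0 1) :
    σ (x, y) * (x ^ 2 * y ^ 2) =
      σ (2 * x * y / (x + y), 2 * x * y / (x + y)) * (2 * x * y / (x + y)) ^ 4 := by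
  obtain ⟨hx0, hx1⟩ := hx
  obtain ⟨hy0, hy1⟩ := hy
  have hx' : 1 < x⁻¹ := one_lt_inv₀ hx0 |>.2 hx1
  have hy' : 1 < y⁻¹ := one_lt_inv₀ hy0 |>.2 hy1
  have hstart : levelCurve (x⁻¹ + y⁻¹) x⁻¹ = (x, y) := by simp [levelCurve]
  have hmid : levelCurve (x⁻¹ + y⁻¹) ((x⁻¹ + y⁻¹) / 2) =
      (2 * x * y / (x + y), 2 * x * y / (x + y)) := by
    simp only [levelCurve, Prod.mk.injEq]
    constructor <;> field_simp <;> ring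
  have h := weight_levelCurve_eq hσ hflow (c := x⁻¹ + y⁻¹) (s := x⁻¹) (t := (x⁻¹ + y⁻¹) / 2)
    ⟨hx', by linarith⟩ ⟨by linarith, by linarith⟩
  rw [hstart, hmid] at h
  rw [h]
  ring

theorem apply_mul_sq_le {σ : ℝ × ℝ → ℝ} (hσ : DifferentiableOn ℝ σ unitSquare)
    (hflow : ∀ p ∈ unitSquare, fderiv ℝ σ p (-p.1 ^ 2, p.2 ^ 2) = 2 * (p.1 - p.2) * σ p)
    (hpos : ∀ p ∈ unitSquare, 0 < σ p)
    {C : ℝ} (hC : ∀ p ∈ unitSquare, σ p ≤ C)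
    {x y : ℝ} (hx : x ∈ Ioo 0 1) (hy : y ∈ Ioo 0 1) :
    σ (x, y) * y ^ 2 ≤ 16 * C * x ^ 2 := by
  have hid := weight_eq_harmonicMean hσ hflow hx hy
  obtain ⟨hx0, hx1⟩ := hx
  obtain ⟨hy0, hy1⟩ := hy
  set m := 2 * x * y / (x + y)
  have hm0 : 0 < m := by positivity
  have hm : m ≤ 2 * x := by rw [div_le_iff₀ (by positivity)]; nlinarith
  have hm1 : m < 1 := by rw [div_lt_one (by positivity)]; nlinarith
  have hmΩ : (m, m) ∈ unitSquare := ⟨⟨hm0, hm1⟩, ⟨hm0, hm1⟩⟩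
  have hCpos : 0 < C := (hpos _ hmΩ).trans_le (hC _ hmΩ)
  refine le_of_mul_le_mul_right ?_ (by positivity : 0 < x ^ 2)
  calc σ (x, y) * y ^ 2 * x ^ 2 = σ (m, m) * m ^ 4 := by rw [← hid]; ring
    _ ≤ C * (2 * x) ^ 4 := by
      gcongr
      exact hC _ hmΩ
    _ = 16 * C * x ^ 2 * x ^ 2 := by ring

/-- for u(x,y) = (y³−x³)/3 on Ω = (0,1)², there is no positive C¹ conductivity
σ with σ and σ⁻¹ bounded on Ω such that div(σ∇u) = 0 in Ω. -/
theorem stmt6 :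
    let u : ℝ × ℝ → ℝ := fun p => (p.2 ^ 3 - p.1 ^ 3) / 3
    let Ω : Set (ℝ × ℝ) := Set.Ioo (0:ℝ) 1 ×ˢ Set.Ioo (0:ℝ) 1
    ¬ ∃ σ : ℝ × ℝ → ℝ, (∀ p ∈ Ω, 0 < σ p) ∧ ContDiffOn ℝ 1 σ Ω ∧
      (∃ C : ℝ, ∀ p ∈ Ω, σ p ≤ C) ∧ (∃ C' : ℝ, ∀ p ∈ Ω, (σ p)⁻¹ ≤ C') ∧
      (∀ p ∈ Ω, pdx (fun q => σ q * pdx u q) p + pdy (fun q => σ q * pdy u q) p = 0) := by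
  intro u Ω
  rintro ⟨σ, hpos, hσ, ⟨C, hC⟩, ⟨C', hC'⟩, hpde⟩
  have hdiff : DifferentiableOn ℝ σ Ω := hσ.differentiableOn one_ne_zero
  have hflow : ∀ p ∈ Ω, fderiv ℝ σ p (-p.1 ^ 2, p.2 ^ 2) = 2 * (p.1 - p.2) * σ p :=
    fun p hp => fderiv_apply_neg_sq_sq
      (hdiff.differentiableAt (isOpen_unitSquare.mem_nhds hp)) (hpde p hp)
  have hcenter : ((1 : ℝ) / 2, (1 : ℝ) / 2) ∈ Ω :=
    ⟨⟨by norm_num, by norm_num⟩, ⟨by norm_num, by norm_num⟩⟩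
  have hCpos : 0 < C := (hpos _ hcenter).trans_le (hC _ hcenter)
  have hC'pos : 0 < C' := (inv_pos.2 (hpos _ hcenter)).trans_le (hC' _ hcenter)
  set x : ℝ := (64 * C * C' + 2)⁻¹
  have hx0 : 0 < x := by positivity
  have hx1 : x < 1 := inv_lt_one_of_one_lt₀ (by nlinarith)
  have hxΩ : (x, (1 : ℝ) / 2) ∈ Ω := ⟨⟨hx0, hx1⟩, ⟨by norm_num, by norm_num⟩⟩
  have hsmall : 64 * C * C' * x < 1 := by
    rw [← div_eq_mul_inv, div_lt_one (by positivity)]; linarith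
  have hdecay := apply_mul_sq_le hdiff hflow hpos hC ⟨hx0, hx1⟩ hxΩ.2
  have : (1 : ℝ) < 1 := calc
    1 ≤ C' * σ (x, 1 / 2) := (inv_le_iff_one_le_mul₀ (hpos _ hxΩ)).1 (hC' _ hxΩ)
    _ ≤ C' * (64 * C * x ^ 2) := by gcongr; linarith
    _ = 64 * C * C' * x * x := by ring
    _ < 1 := mul_lt_one_of_nonneg_of_lt_one_left (by positivity) hsmall hx1.le
  exact lt_irrefl 1 this
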